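/- In the Lie-algebraic setting with [E1,E2]=2kξ, [E2,ξ]=−(λ+c)E1, [ξ,E1]=(λ−c)E2 and orthonormal frame (ξ,E1,E2), define φ by φξ=0, φE1=E2, φE2=−E1, η the dual of ξ, and h = (1/2)L_ξφ. Then for all X, Y in the Lie algebra, R(X,Y)ξ = (k²−λ²)(η(Y)X − η(X)Y) + 2(k+c)(η(Y)hX − η(X)hY), i.e., the manifold is a (k²−λ², 2(k+c))-space. -/

import Mathlib

/-!
Since the metric is nondegenerate, the Koszul formula determines `∇` on left-invariant fields,
and solving it gives an explicit bilinear map with constant coefficients. Substituting it,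
`R(X, Y) ξ` becomes a polynomial identity in the coordinates of `X` and `Y`.
-/

noncomputable section

def ξ : Fin 3 → ℝ := ![1, 0, 0]
def E1 : Fin 3 → ℝ := ![0, 1, 0]
def E2 : Fin 3 → ℝ := ![0, 0, 1]

/-- Inner product making (ξ, E1, E2) orthonormal. -/
def ip (x y : Fin 3 → ℝ) : ℝ := x 0 * y 0 + x 1 * y 1 + x 2 * y 2

/-- Bracket [E1,E2] = 2k ξ, [E2,ξ] = −(λ+c) E1, [ξ,E1] = (λ−c) E2. -/
def br (k lam c : ℝ) (x y : Fin 3 → ℝ) : Fin 3 → ℝ :=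
  ![2 * k * (x 1 * y 2 - x 2 * y 1),
    (lam + c) * (x 0 * y 2 - x 2 * y 0),
    (lam - c) * (x 0 * y 1 - x 1 * y 0)]

/-- The structure tensor φ: φξ = 0, φE1 = E2, φE2 = −E1. -/
def φ (x : Fin 3 → ℝ) : Fin 3 → ℝ := ![0, -(x 2), x 1]

/-- The dual form η of ξ. -/
def η (x : Fin 3 → ℝ) : ℝ := x 0

/-- h = (1/2) L_ξ φ computed on left-invariant fields. -/
def h (k lam c : ℝ) (x : Fin 3 → ℝ) : Fin 3 → ℝ :=
  (1 / 2 : ℝ) • (br k lam c ξ (φ x) - φ (br k lam c ξ x))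

def leviCivita (k lam c : ℝ) (X Y : Fin 3 → ℝ) : Fin 3 → ℝ :=
  ![(k + lam) * X 1 * Y 2 + (lam - k) * X 2 * Y 1,
    (k + c) * X 0 * Y 2 + (k - lam) * X 2 * Y 0,
    -(k + c) * X 0 * Y 1 - (k + lam) * X 1 * Y 0]

theorem ip_left_injective {u v : Fin 3 → ℝ} (huv : ∀ Z, ip u Z = ip v Z) : u = v := by
  funext i
  fin_cases i
  · simpa [ip, ξ] using huv ξ
  · simpa [ip, E1] using huv E1
  · simpa [ip, E2] using huv E2

theorem two_mul_ip_leviCivita (k lam c : ℝ) (X Y Z : Fin 3 → ℝ) :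
    2 * ip (leviCivita k lam c X Y) Z =
      ip (br k lam c X Y) Z - ip (br k lam c Y Z) X + ip (br k lam c Z X) Y := by
  simp only [ip, br, leviCivita, Matrix.cons_val_zero, Matrix.cons_val_one, Matrix.cons_val_two,
    Matrix.head_cons, Matrix.tail_cons]
  ring

theorem eq_leviCivita_of_koszul (k lam c : ℝ) (nabla : (Fin 3 → ℝ) → (Fin 3 → ℝ) → (Fin 3 → ℝ))
    (hK : ∀ X Y Z, 2 * ip (nabla X Y) Z =
      ip (br k lam c X Y) Z - ip (br k lam c Y Z) X + ip (br k lam c Z X) Y) :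
    nabla = leviCivita k lam c := by
  funext X Y
  refine ip_left_injective fun Z => ?_
  linarith [hK X Y Z, two_mul_ip_leviCivita k lam c X Y Z]

theorem leviCivita_curvature_ξ (k lam c : ℝ) (X Y : Fin 3 → ℝ) :
    leviCivita k lam c X (leviCivita k lam c Y ξ) - leviCivita k lam c Y (leviCivita k lam c X ξ)
        - leviCivita k lam c (br k lam c X Y) ξ =
      (k ^ 2 - lam ^ 2) • (η Y • X - η X • Y) +
      (2 * (k + c)) • (η Y • h k lam c X - η X • h k lam c Y) := by
  funext i
  fin_cases i <;>
    simp only [leviCivita, br, ξ, φ, η, h, Fin.zero_eta, Fin.mk_one, Fin.reduceFinMk,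
      Matrix.cons_val, Pi.add_apply, Pi.sub_apply, Pi.smul_apply, smul_eq_mul] <;> ring

/-- The manifold is a (k²−λ², 2(k+c))-space:
R(X,Y)ξ = (k²−λ²)(η(Y)X − η(X)Y) + 2(k+c)(η(Y)hX − η(X)hY). -/
theorem km_space_identity (k lam c : ℝ)
    (nabla : (Fin 3 → ℝ) → (Fin 3 → ℝ) → (Fin 3 → ℝ))
    (hK : ∀ X Y Z, 2 * ip (nabla X Y) Z =
      ip (br k lam c X Y) Z - ip (br k lam c Y Z) X + ip (br k lam c Z X) Y)
    (R : (Fin 3 → ℝ) → (Fin 3 → ℝ) → (Fin 3 → ℝ) → (Fin 3 → ℝ))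
    (hR : ∀ X Y Z, R X Y Z =
      nabla X (nabla Y Z) - nabla Y (nabla X Z) - nabla (br k lam c X Y) Z) :
    ∀ X Y, R X Y ξ =
      (k ^ 2 - lam ^ 2) • (η Y • X - η X • Y) +
      (2 * (k + c)) • (η Y • h k lam c X - η X • h k lam c Y) := by
  intro X Y
  rw [hR, eq_leviCivita_of_koszul k lam c nabla hK]
  exact leviCivita_curvature_ξ k lam c X Y
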